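/- arXiv:2211.02173 — 3 statements merged into one kernel-verified Lean document; each statement's English description precedes it below -/
import Mathlib

section
/- Let α : X → ℝ be continuous and define C : X → SL(2,ℝ) by C(x) = R_{−π α(T x)} A(x) R_{π α(x)}. If g̃ is a family of lifts for A, then g̃_C(x, y) := g̃(x, y + α(x)) − α(T x) defines a family of lifts for C, whose iterates satisfy G̃_{x,C,n}(y) = G̃_{x,A,n}(y + α(x)) − α(Tⁿ x) for all x ∈ X, y ∈ ℝ, n ≥ 1; consequently, for every x ∈ X and ρ ∈ ℝ, if lim_{n→∞} G̃_{x,A,n}(z)/n = ρ for every z ∈ ℝ, then lim_{n→∞} G̃_{x,C,n}(y)/n = ρ for every y ∈ ℝ. -/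
open MeasureTheory Topology Filter

noncomputable section

/-- The real projective line, as the projectivization of `ℝ²`. -/
abbrev RP1 : Type := Projectivization ℝ (Fin 2 → ℝ)

instance : TopologicalSpace RP1 :=
  inferInstanceAs (TopologicalSpace (Quotient (projectivizationSetoid ℝ (Fin 2 → ℝ))))

abbrev SL2 : Type := Matrix.SpecialLinearGroup (Fin 2) ℝ

instance : TopologicalSpace SL2 :=
  TopologicalSpace.induced (fun A : SL2 => (A : Matrix (Fin 2) (Fin 2) ℝ)) inferInstance

/-- The action of `SL(2,ℝ)` on `ℝP¹`: `A · span v = span (A v)`. -/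
def SL2act (A : SL2) (p : RP1) : RP1 :=
  Projectivization.map ((A : Matrix (Fin 2) (Fin 2) ℝ).mulVecLin)
    (by
      rw [Matrix.coe_mulVecLin]
      exact Matrix.mulVec_injective_iff_isUnit.2
        ((Matrix.isUnit_iff_isUnit_det _).2 (by simp))) p

/-- The covering map `π : ℝ → ℝP¹`, `π(y) = span (cos(πy), sin(πy))`. -/
def RP1proj (y : ℝ) : RP1 :=
  Projectivization.mk ℝ ![Real.cos (Real.pi * y), Real.sin (Real.pi * y)] (by
    intro h
    have h0 : Real.cos (Real.pi * y) = 0 := by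
      have := congrFun h 0; simpa using this
    have h1 : Real.sin (Real.pi * y) = 0 := by
      have := congrFun h 1; simpa using this
    nlinarith [Real.sin_sq_add_cos_sq (Real.pi * y)])

/-- An invariant section of the cocycle `(T, A)`. -/
def IsInvariantSection {X : Type*} [TopologicalSpace X] (T : X ≃ₜ X) (A : X → SL2)
    (d : C(X, RP1)) : Prop :=
  ∀ x, SL2act (A x) (d x) = d (T x)

/-- A (continuous, commuting with the deck transformation) family of lifts for the projective
action of `A`. -/
def IsLiftFamily {X : Type*} [TopologicalSpace X] (A : X → SL2) (g : X → ℝ → ℝ) : Prop :=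
  Continuous (fun p : X × ℝ => g p.1 p.2) ∧
    (∀ x y, RP1proj (g x y) = SL2act (A x) (RP1proj y)) ∧
    ∀ x y, g x (y + 1) = g x y + 1

/-- Iterates of a family of lifts: `G̃_{x,n} = g̃(T^{n-1}x, ·) ∘ ⋯ ∘ g̃(x, ·)`. -/
def liftIter {X : Type*} (T : X → X) (g : X → ℝ → ℝ) : ℕ → X → ℝ → ℝ
  | 0, _, y => y
  | n + 1, x, y => liftIter T g n (T x) (g x y)

/-- The rotation matrix `R_θ` as an element of `SL(2,ℝ)`. -/
def rotSL2 (θ : ℝ) : SL2 :=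
  ⟨!![Real.cos θ, -Real.sin θ; Real.sin θ, Real.cos θ], by
    simp [Matrix.det_fin_two_of]
    nlinarith [Real.sin_sq_add_cos_sq θ]⟩

/-!
On `ℝP¹`, the rotation `R_{πt}` acts as the translation `π(y) ↦ π(y + t)`, so conjugating `A` by
rotations amounts to conjugating its lifts by the translations `y ↦ y + α x`. The iterates then
telescope, and the only trace of the conjugation is the correction `α(Tⁿ x)`, which is bounded
because `X` is compact and hence disappears after dividing by `n`.
-/

lemma SL2act_mul (M N : SL2) (p : RP1) : SL2act (M * N) p = SL2act M (SL2act N p) := by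
  induction p using Projectivization.ind with
  | h v hv =>
    simp only [SL2act, Projectivization.map_mk, Matrix.mulVecLin_apply,
      Matrix.SpecialLinearGroup.coe_mul, Matrix.mulVec_mulVec]

lemma SL2act_rotSL2_RP1proj (t y : ℝ) :
    SL2act (rotSL2 (Real.pi * t)) (RP1proj y) = RP1proj (y + t) := by
  simp only [SL2act, RP1proj, Projectivization.map_mk, Matrix.mulVecLin_apply]
  congr 1
  funext i
  fin_cases i <;>
    simp [rotSL2, Matrix.mulVec, dotProduct, mul_add, Real.cos_add, Real.sin_add] <;>
    ring

theorem IsLiftFamily.conj_rotSL2 {X : Type*} [TopologicalSpace X] {T : X → X}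
    (hT : Continuous T) {A : X → SL2} {α : X → ℝ} (hα : Continuous α) {g : X → ℝ → ℝ}
    (hg : IsLiftFamily A g) :
    IsLiftFamily (fun x => rotSL2 (-(Real.pi * α (T x))) * A x * rotSL2 (Real.pi * α x))
      (fun x y => g x (y + α x) - α (T x)) := by
  obtain ⟨hg_cont, hg_proj, hg_per⟩ := hg
  refine ⟨?_, fun x y => ?_, fun x y => ?_⟩ <;> dsimp only
  · exact (hg_cont.comp (continuous_fst.prodMk (continuous_snd.add (hα.comp continuous_fst)))).sub
      (hα.comp (hT.comp continuous_fst))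
  · rw [SL2act_mul, SL2act_mul, SL2act_rotSL2_RP1proj, ← hg_proj, ← mul_neg,
      SL2act_rotSL2_RP1proj, sub_eq_add_neg]
  · rw [add_right_comm, hg_per, sub_add_eq_add_sub]

theorem liftIter_conj {X : Type*} (T : X → X) (g : X → ℝ → ℝ) (α : X → ℝ) (n : ℕ) (x : X)
    (y : ℝ) :
    liftIter T (fun x y => g x (y + α x) - α (T x)) n x y
      = liftIter T g n x (y + α x) - α (T^[n] x) := by
  induction n generalizing x y with
  | zero => simp [liftIter]
  | succ n ih => simp only [liftIter, ih, sub_add_cancel, Function.iterate_succ_apply]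

theorem tendsto_sub_div_natCast_of_bddBelow_of_bddAbove {u v : ℕ → ℝ} {ρ : ℝ}
    (hu : Tendsto (fun n : ℕ => u n / n) atTop (𝓝 ρ)) (hv_below : BddBelow (Set.range v))
    (hv_above : BddAbove (Set.range v)) :
    Tendsto (fun n : ℕ => (u n - v n) / n) atTop (𝓝 ρ) := by
  obtain ⟨b, hb⟩ := hv_below
  obtain ⟨B, hB⟩ := hv_above
  have hv : Tendsto (fun n : ℕ => v n / n) atTop (𝓝 0) :=
    tendsto_bdd_div_atTop_nhds_zero (.of_forall fun n => hb ⟨n, rfl⟩)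
      (.of_forall fun n => hB ⟨n, rfl⟩) tendsto_natCast_atTop_atTop
  simpa only [sub_div, sub_zero] using hu.sub hv

theorem lift_family_conjugated_by_rotations_general
    {X : Type*} [MetricSpace X] [CompactSpace X]
    (T : X ≃ₜ X)
    (A : X → SL2)
    (α : X → ℝ) (hα : Continuous α)
    (C : X → SL2)
    (hC : ∀ x, C x = rotSL2 (-(Real.pi * α (T x))) * A x * rotSL2 (Real.pi * α x))
    (g : X → ℝ → ℝ) (hg : IsLiftFamily A g)
    (gC : X → ℝ → ℝ)
    (hgC : ∀ x y, gC x y = g x (y + α x) - α (T x)) :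
    IsLiftFamily C gC ∧
      (∀ (x : X) (y : ℝ) (n : ℕ), 1 ≤ n →
        liftIter (⇑T) gC n x y = liftIter (⇑T) g n x (y + α x) - α ((⇑T)^[n] x)) ∧
      ∀ (x : X) (ρ : ℝ),
        (∀ z : ℝ, Tendsto (fun n : ℕ => liftIter (⇑T) g n x z / n) atTop (𝓝 ρ)) →
        ∀ y : ℝ, Tendsto (fun n : ℕ => liftIter (⇑T) gC n x y / n) atTop (𝓝 ρ) := by
  obtain rfl : C = _ := funext hC
  obtain rfl : gC = _ := funext fun x => funext (hgC x)
  refine ⟨hg.conj_rotSL2 T.continuous hα, fun x y n _ => liftIter_conj T g α n x y,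
    fun x ρ hρ y => ?_⟩
  have hα_orbit : Set.range (fun n => α (T^[n] x)) ⊆ Set.range α := Set.range_comp_subset_range _ α
  simpa only [liftIter_conj] using tendsto_sub_div_natCast_of_bddBelow_of_bddAbove (hρ (y + α x))
    ((isCompact_range hα).bddBelow.mono hα_orbit) ((isCompact_range hα).bddAbove.mono hα_orbit)

/-- Conjugating a cocycle by rotations `C(x) = R_{-πα(Tx)} A(x) R_{πα(x)}`
transforms a family of lifts `g̃` for `A` into the family of lifts
`g̃_C(x,y) = g̃(x, y + α(x)) - α(Tx)` for `C`; the iterates transform accordingly, and the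
fiberwise rotation number is unchanged. -/
theorem lift_family_conjugated_by_rotations
    {X : Type*} [MetricSpace X] [CompactSpace X]
    (T : X ≃ₜ X)
    (A : X → SL2) (hA : Continuous A)
    (α : X → ℝ) (hα : Continuous α)
    (C : X → SL2)
    (hC : ∀ x, C x = rotSL2 (-(Real.pi * α (T x))) * A x * rotSL2 (Real.pi * α x))
    (g : X → ℝ → ℝ) (hg : IsLiftFamily A g)
    (gC : X → ℝ → ℝ)
    (hgC : ∀ x y, gC x y = g x (y + α x) - α (T x)) :
    IsLiftFamily C gC ∧
      (∀ (x : X) (y : ℝ) (n : ℕ), 1 ≤ n →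
        liftIter (⇑T) gC n x y = liftIter (⇑T) g n x (y + α x) - α ((⇑T)^[n] x)) ∧
      ∀ (x : X) (ρ : ℝ),
        (∀ z : ℝ, Tendsto (fun n : ℕ => liftIter (⇑T) g n x z / n) atTop (𝓝 ρ)) →
        ∀ y : ℝ, Tendsto (fun n : ℕ => liftIter (⇑T) gC n x y / n) atTop (𝓝 ρ) :=
  lift_family_conjugated_by_rotations_general T A α hα C hC g hg gC hgC

end
end

section
/- Assume X is connected. Let E₁, E₂ ∈ ℝ be such that (T, A_{E₁}) and (T, A_{E₂}) are uniformly hyperbolic, with unstable sections d₁ and d₂ respectively. Let g̃₁ and g̃₂ be families of lifts for A_{E₁} and A_{E₂}, and let φ₁ and φ₂ be the displacement functions of (d₁, g̃₁) and (d₂, g̃₂). If d₁ and d₂ are homotopic as maps X → ℝP¹, then ∫_X φ₁ dμ − ∫_X φ₂ dμ is an integer. -/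
open MeasureTheory Topology Filter

noncomputable section

/-- The Schrödinger cocycle matrix `A_E(x)`. -/
def schrodingerCocycle {X : Type*} (f : X → ℝ) (E : ℝ) (x : X) : SL2 :=
  ⟨!![E - f x, -1; 1, 0], by simp [Matrix.det_fin_two_of]⟩

/-- Iterates `A^n(x) = A(T^{n-1}x) ⋯ A(x)` for `n ∈ ℕ`. -/
def cocIterN {X : Type*} (T : X → X) (A : X → SL2) : ℕ → X → SL2
  | 0, _ => 1
  | n + 1, x => A (T^[n] x) * cocIterN T A n x

/-- Iterates `A^n(x)` for `n ∈ ℤ`, with `A^{-n}(x) = (A^n(T^{-n}x))⁻¹`. -/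
def cocIterZ {X : Type*} [TopologicalSpace X] (T : X ≃ₜ X) (A : X → SL2) (n : ℤ) (x : X) : SL2 :=
  if 0 ≤ n then cocIterN T A n.toNat x
  else (cocIterN T A (-n).toNat ((⇑T.symm)^[(-n).toNat] x))⁻¹

/-- Operator norm of a matrix in `SL(2,ℝ)` (acting on Euclidean `ℝ²`). -/
def SL2norm (A : SL2) : ℝ := ‖Matrix.toEuclideanCLM (𝕜 := ℝ) (A : Matrix (Fin 2) (Fin 2) ℝ)‖

/-- Uniform hyperbolicity of the cocycle `(T, A)`. -/
def UniformlyHyperbolic {X : Type*} [TopologicalSpace X] (T : X ≃ₜ X) (A : X → SL2) : Prop :=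
  ∃ C > 0, ∃ l > 1, ∀ (x : X) (n : ℤ), C * l ^ |n| ≤ SL2norm (cocIterZ T A n x)

/-- An unstable section of the cocycle `(T, A)`. -/
def IsUnstableSection {X : Type*} [TopologicalSpace X] (T : X ≃ₜ X) (A : X → SL2)
    (d : C(X, RP1)) : Prop :=
  IsInvariantSection T A d ∧
    ∃ C > 0, ∃ l > 1, ∀ (x : X) (n : ℕ) (v : Fin 2 → ℝ) (hv : v ≠ 0),
      Projectivization.mk ℝ v hv = d x →
        ‖((cocIterZ T A (-(n : ℤ)) x : Matrix (Fin 2) (Fin 2) ℝ).mulVec v)‖ ≤ C * (l ^ n)⁻¹ * ‖v‖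

/-! The map `span v ↦ z / z̄ = z² / |z|²` (with `z = v₀ + i v₁`) identifies `ℝP¹` with the circle
group, and turns a homotopy from `d₁` to `d₂` into a homotopy from the constant map `1` to
`d₂ / d₁`. Lifting it through `exp` gives a continuous `s : X → ℝ` such that `π (y + s x) = d₂ x`
whenever `π y = d₁ x`. Comparing two lifts of `d₂ (T x)` then shows `φ₁ - φ₂ - (s - s ∘ T)` is
integer-valued; being continuous on a connected space it is a constant `c ∈ ℤ`, and integrating
against the `T`-invariant measure `μ` kills the coboundary `s - s ∘ T`. -/

open Real ComplexConjugate

lemma Circle.ofConjDivSelf_ofReal_mul {t : ℝ} {z : ℂ} (h : (t : ℂ) * z ≠ 0) (hz : z ≠ 0) :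
    Circle.ofConjDivSelf (t * z) h = Circle.ofConjDivSelf z hz := by
  ext1
  simp only [Circle.ofConjDivSelf_coe, map_mul, Complex.conj_ofReal]
  exact mul_div_mul_left _ _ (left_ne_zero_of_mul h)

lemma Circle.exp_two_pi_mul_eq_iff {a b : ℝ} :
    Circle.exp (2 * π * a) = Circle.exp (2 * π * b) ↔ ∃ n : ℤ, a = b + n := by
  rw [Circle.exp_eq_exp]
  refine exists_congr fun n => ?_
  rw [show 2 * π * b + n * (2 * π) = 2 * π * (b + n) by ring, mul_right_inj' (by positivity)]

theorem IsLocalHomeomorph.exists_continuousAt_lift {E B X : Type*} [TopologicalSpace E]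
    [TopologicalSpace B] [TopologicalSpace X] {p : E → B} (hp : IsLocalHomeomorph p)
    {u : X → B} {x₀ : X} (hu : ContinuousAt u x₀) {e₀ : E} (he₀ : p e₀ = u x₀) :
    ∃ ℓ : X → E, ContinuousAt ℓ x₀ ∧ ∀ᶠ x in 𝓝 x₀, p (ℓ x) = u x := by
  set σ := hp.localInverseAt e₀
  have hx₀ : u x₀ ∈ σ.source := he₀ ▸ hp.apply_self_mem_localInverseAt_source
  exact ⟨σ ∘ u, (σ.continuousAt hx₀).comp hu,
    Filter.mem_of_superset (hu.preimage_mem_nhds (σ.open_source.mem_nhds hx₀))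
      fun x hx => hp.apply_localInverseAt_of_mem hx⟩

lemma exists_int_forall_eq_of_continuous {X : Type*} [TopologicalSpace X] [PreconnectedSpace X]
    {k : X → ℝ} (hk : Continuous k) (hint : ∀ x, ∃ n : ℤ, k x = n) : ∃ c : ℤ, ∀ x, k x = c := by
  obtain ⟨_, ⟨c, rfl⟩, hc⟩ := isPreconnected_univ.eqOn_const_of_mapsTo
    Int.isClosedEmbedding_coe_real.isEmbedding.isDiscrete_range hk.continuousOn
    (fun x _ => (hint x).imp fun _ hn => hn.symm) ⟨0, 0, Int.cast_zero⟩
  exact ⟨c, fun x => hc (Set.mem_univ x)⟩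

lemma MeasureTheory.MeasurePreserving.integral_sub_comp_eq_zero {α E : Type*}
    [MeasurableSpace α] [NormedAddCommGroup E] [NormedSpace ℝ E] {μ : Measure α} {T : α → α}
    (hT : MeasurePreserving T μ μ) (hTe : MeasurableEmbedding T) {s : α → E}
    (hs : Integrable s μ) : ∫ x, (s x - s (T x)) ∂μ = 0 := by
  have hsT : Integrable (fun x => s (T x)) μ := (hT.integrable_comp_emb hTe).2 hs
  rw [integral_sub hs hsT, hT.integral_comp hTe, sub_self]

lemma RP1proj_add_one (y : ℝ) : RP1proj (y + 1) = RP1proj y := by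
  refine (Projectivization.mk_eq_mk_iff' ℝ _ _ _ _).2 ⟨-1, ?_⟩
  ext i
  fin_cases i <;> simp [mul_add, Real.cos_add_pi, Real.sin_add_pi]

lemma RP1proj_add_intCast (y : ℝ) (n : ℤ) : RP1proj (y + n) = RP1proj y := by
  simpa using (Function.Periodic.int_mul (c := 1) RP1proj_add_one n) y

lemma RP1proj_surjective : Function.Surjective RP1proj := by
  intro p
  induction p using Projectivization.ind with
  | h v hv =>
    set z : ℂ := ⟨v 0, v 1⟩
    have hz : z ≠ 0 := by
      intro h
      apply hv
      ext i
      fin_cases i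
      · exact congrArg Complex.re h
      · exact congrArg Complex.im h
    -- polar coordinates: `v = ‖z‖ • (cos (arg z), sin (arg z))`
    refine ⟨Complex.arg z / π, (Projectivization.mk_eq_mk_iff' ℝ _ _ _ _).2 ⟨‖z‖⁻¹, ?_⟩⟩
    have hn : ‖z‖ ≠ 0 := norm_ne_zero_iff.2 hz
    ext i
    fin_cases i <;> simp [mul_div_cancel₀ _ pi_ne_zero, Complex.cos_arg hz, Complex.sin_arg, z] <;>
      field_simp

namespace RP1

def conjCoord (v : Fin 2 → ℝ) : ℂ := v 0 - v 1 * Complex.I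

lemma conjCoord_ne_zero {v : Fin 2 → ℝ} (hv : v ≠ 0) : conjCoord v ≠ 0 := by
  intro h
  apply hv
  ext i
  fin_cases i
  · simpa [conjCoord] using congrArg Complex.re h
  · simpa [conjCoord] using congrArg Complex.im h

lemma conjCoord_smul (t : ℝ) (v : Fin 2 → ℝ) : conjCoord (t • v) = t * conjCoord v := by
  simp only [conjCoord, Pi.smul_apply, smul_eq_mul, Complex.ofReal_mul]
  ring

lemma continuous_conjCoord : Continuous conjCoord := by
  unfold conjCoord
  fun_prop

def toCircle : RP1 → Circle :=
  Projectivization.lift (fun v => Circle.ofConjDivSelf (conjCoord v) (conjCoord_ne_zero v.2))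
    (by
      rintro ⟨a, ha⟩ ⟨b, hb⟩ t rfl
      simp only [conjCoord_smul]
      exact Circle.ofConjDivSelf_ofReal_mul _ _)

lemma continuous_toCircle : Continuous toCircle := by
  refine Continuous.quotient_lift (Continuous.subtype_mk ?_ _) _
  have hc : Continuous fun v : {v : Fin 2 → ℝ // v ≠ 0} => conjCoord v :=
    continuous_conjCoord.comp continuous_subtype_val
  exact (Complex.continuous_conj.comp hc).div hc fun v => conjCoord_ne_zero v.2

lemma toCircle_RP1proj (y : ℝ) : toCircle (RP1proj y) = Circle.exp (2 * π * y) := by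
  have h : conjCoord ![cos (π * y), sin (π * y)] =
      conj (Complex.exp ((π * y : ℝ) * Complex.I)) := by
    rw [Complex.exp_mul_I, ← Complex.ofReal_cos, ← Complex.ofReal_sin]
    simp only [conjCoord, Matrix.cons_val_zero, Matrix.cons_val_one, map_add, map_mul,
      Complex.conj_ofReal, Complex.conj_I]
    ring
  ext1
  simp only [RP1proj, toCircle, Projectivization.lift_mk, Circle.ofConjDivSelf_coe, h,
    Circle.coe_exp, Complex.conj_conj, ← Complex.exp_conj, ← Complex.exp_sub]
  congr 1
  simp only [map_mul, Complex.conj_ofReal, Complex.conj_I]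
  push_cast
  ring

end RP1

open RP1

lemma RP1proj_eq_RP1proj_iff {a b : ℝ} : RP1proj a = RP1proj b ↔ ∃ n : ℤ, a = b + n := by
  refine ⟨fun h => Circle.exp_two_pi_mul_eq_iff.1 ?_, ?_⟩
  · rw [← toCircle_RP1proj, ← toCircle_RP1proj, h]
  · rintro ⟨n, rfl⟩
    exact RP1proj_add_intCast b n

lemma RP1proj_eq_iff {y : ℝ} {p : RP1} :
    RP1proj y = p ↔ Circle.exp (2 * π * y) = toCircle p := by
  obtain ⟨y', rfl⟩ := RP1proj_surjective p
  rw [toCircle_RP1proj, RP1proj_eq_RP1proj_iff, Circle.exp_two_pi_mul_eq_iff]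

lemma exists_continuousAt_RP1proj_lift {X : Type*} [TopologicalSpace X] {d : X → RP1}
    (hd : Continuous d) (x₀ : X) :
    ∃ y : X → ℝ, ContinuousAt y x₀ ∧ ∀ᶠ x in 𝓝 x₀, RP1proj (y x) = d x := by
  obtain ⟨θ₀, hθ₀⟩ := Circle.exp_surjective (toCircle (d x₀))
  obtain ⟨θ, hθ, hlift⟩ := Circle.isCoveringMap_exp.isLocalHomeomorph.exists_continuousAt_lift
    (continuous_toCircle.comp hd).continuousAt hθ₀
  refine ⟨fun x => θ x / (2 * π), hθ.div_const _, hlift.mono fun x hx => RP1proj_eq_iff.2 ?_⟩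
  rwa [mul_div_cancel₀ _ (by positivity)]

lemma exists_continuous_shift_of_homotopic {X : Type*} [TopologicalSpace X] {d₁ d₂ : C(X, RP1)}
    (h : d₁.Homotopic d₂) :
    ∃ s : X → ℝ, Continuous s ∧ ∀ x y, RP1proj y = d₁ x → RP1proj (y + s x) = d₂ x := by
  obtain ⟨H⟩ := h
  let K : C(unitInterval × X, Circle) :=
    ⟨fun p => toCircle (H p) / toCircle (d₁ p.2), (continuous_toCircle.comp H.continuous).div'
      (continuous_toCircle.comp (d₁.continuous.comp continuous_snd))⟩
  have hK₀ : ∀ x, K (0, x) = Circle.exp (ContinuousMap.const X 0 x) := by simp [K]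
  set L := Circle.isCoveringMap_exp.liftHomotopy K _ hK₀
  have hL : ∀ x, Circle.exp (L (1, x)) = toCircle (d₂ x) / toCircle (d₁ x) := fun x => by
    rw [show Circle.exp (L (1, x)) = K (1, x) from
      congr_fun (Circle.isCoveringMap_exp.liftHomotopy_lifts K _ hK₀) (1, x)]
    simp [K]
  refine ⟨fun x => L (1, x) / (2 * π), by fun_prop, fun x y hy => ?_⟩
  rw [RP1proj_eq_iff] at hy ⊢
  rw [mul_add, mul_div_cancel₀ _ (by positivity), Circle.exp_add, hy, hL]
  exact mul_div_cancel _ _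

section Displacement

variable {X : Type*}

def IsDisplacement (g : X → ℝ → ℝ) (d : X → RP1) (φ : X → ℝ) : Prop :=
  ∀ x y, RP1proj y = d x → φ x = g x y - y

lemma IsDisplacement.continuous [TopologicalSpace X] {g : X → ℝ → ℝ} {d : X → RP1} {φ : X → ℝ}
    (hφ : IsDisplacement g d φ) (hg : Continuous fun p : X × ℝ => g p.1 p.2)
    (hd : Continuous d) : Continuous φ := by
  refine continuous_iff_continuousAt.2 fun x₀ => ?_
  obtain ⟨y, hy, hlift⟩ := exists_continuousAt_RP1proj_lift hd x₀
  have hgy : ContinuousAt (fun x => g x (y x) - y x) x₀ :=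
    (hg.continuousAt.comp (continuousAt_id.prodMk hy)).sub hy
  exact hgy.congr (hlift.mono fun x hx => (hφ x (y x) hx).symm)

lemma IsDisplacement.exists_int_sub_eq [TopologicalSpace X] {T : X ≃ₜ X} {A₁ A₂ : X → SL2}
    {d₁ d₂ : C(X, RP1)} (hd₁ : IsInvariantSection T A₁ d₁) (hd₂ : IsInvariantSection T A₂ d₂)
    {g₁ g₂ : X → ℝ → ℝ} (hg₁ : ∀ x y, RP1proj (g₁ x y) = SL2act (A₁ x) (RP1proj y))
    (hg₂ : ∀ x y, RP1proj (g₂ x y) = SL2act (A₂ x) (RP1proj y)) {φ₁ φ₂ : X → ℝ}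
    (hφ₁ : IsDisplacement g₁ d₁ φ₁) (hφ₂ : IsDisplacement g₂ d₂ φ₂) {s : X → ℝ}
    (hs : ∀ x y, RP1proj y = d₁ x → RP1proj (y + s x) = d₂ x) (x : X) :
    ∃ n : ℤ, φ₁ x - φ₂ x = n + (s x - s (T x)) := by
  obtain ⟨y, hy⟩ := RP1proj_surjective (d₁ x)
  have hy₂ := hs x y hy
  have hlift₁ : RP1proj (g₁ x y + s (T x)) = d₂ (T x) := hs _ _ (by rw [hg₁, hy, hd₁ x])
  have hlift₂ : RP1proj (g₂ x (y + s x)) = d₂ (T x) := by rw [hg₂, hy₂, hd₂ x]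
  obtain ⟨m, hm⟩ := RP1proj_eq_RP1proj_iff.1 (hlift₁.trans hlift₂.symm)
  refine ⟨m, ?_⟩
  rw [hφ₁ x y hy, hφ₂ x _ hy₂]
  linarith

end Displacement

theorem homotopic_sections_rotation_numbers_differ_by_integer_general
    {X : Type*} [MetricSpace X] [CompactSpace X] [ConnectedSpace X]
    [MeasurableSpace X] [BorelSpace X]
    (T : X ≃ₜ X)
    (μ : Measure X) [IsProbabilityMeasure μ]
    (hT : Ergodic (⇑T) μ)
    (f : C(X, ℝ))
    (E₁ E₂ : ℝ)
    (d₁ d₂ : C(X, RP1))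
    (hd₁ : IsUnstableSection T (schrodingerCocycle (⇑f) E₁) d₁)
    (hd₂ : IsUnstableSection T (schrodingerCocycle (⇑f) E₂) d₂)
    (g₁ g₂ : X → ℝ → ℝ)
    (hg₁ : IsLiftFamily (schrodingerCocycle (⇑f) E₁) g₁)
    (hg₂ : IsLiftFamily (schrodingerCocycle (⇑f) E₂) g₂)
    (φ₁ φ₂ : X → ℝ)
    (hφ₁ : ∀ x y, RP1proj y = d₁ x → φ₁ x = g₁ x y - y)
    (hφ₂ : ∀ x y, RP1proj y = d₂ x → φ₂ x = g₂ x y - y)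
    (hhom : d₁.Homotopic d₂) :
    ∃ k : ℤ, (∫ x, φ₁ x ∂μ) - (∫ x, φ₂ x ∂μ) = (k : ℝ) := by
  have hφ₁c : Continuous φ₁ := IsDisplacement.continuous hφ₁ hg₁.1 d₁.continuous
  have hφ₂c : Continuous φ₂ := IsDisplacement.continuous hφ₂ hg₂.1 d₂.continuous
  obtain ⟨s, hs, hshift⟩ := exists_continuous_shift_of_homotopic hhom
  obtain ⟨c, hc⟩ := exists_int_forall_eq_of_continuous
    (k := fun x => φ₁ x - φ₂ x - (s x - s (T x))) (by fun_prop) fun x => by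
      obtain ⟨n, hn⟩ := IsDisplacement.exists_int_sub_eq hd₁.1 hd₂.1 hg₁.2.1 hg₂.2.1 hφ₁ hφ₂
        hshift x
      exact ⟨n, by linarith⟩
  have hint : ∀ {u : X → ℝ}, Continuous u → Integrable u μ := fun hu =>
    hu.integrable_of_hasCompactSupport (.of_compactSpace _)
  refine ⟨c, ?_⟩
  calc (∫ x, φ₁ x ∂μ) - ∫ x, φ₂ x ∂μ = ∫ x, ((c : ℝ) + (s x - s (T x))) ∂μ := by
        rw [← integral_sub (hint hφ₁c) (hint hφ₂c)]
        congr 1 with x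
        linarith [hc x]
    _ = c := by
        rw [integral_add (integrable_const _) (hint (by fun_prop)),
          hT.toMeasurePreserving.integral_sub_comp_eq_zero T.measurableEmbedding (hint hs)]
        simp

/-- Assume `X` is connected and the Schrödinger cocycles at energies `E₁`
and `E₂` are uniformly hyperbolic, with unstable sections `d₁`, `d₂`, families of lifts
`g̃₁`, `g̃₂` and displacement functions `φ₁`, `φ₂`. If `d₁` and `d₂` are homotopic, then
`∫ φ₁ dμ - ∫ φ₂ dμ` is an integer. -/
theorem homotopic_sections_rotation_numbers_differ_by_integer
    {X : Type*} [MetricSpace X] [CompactSpace X] [Nonempty X] [ConnectedSpace X]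
    [MeasurableSpace X] [BorelSpace X]
    (T : X ≃ₜ X)
    (μ : Measure X) [IsProbabilityMeasure μ]
    (hT : Ergodic (⇑T) μ)
    (hfull : ∀ U : Set X, IsOpen U → U.Nonempty → μ U ≠ 0)
    (f : C(X, ℝ))
    (E₁ E₂ : ℝ)
    (hUH₁ : UniformlyHyperbolic T (schrodingerCocycle (⇑f) E₁))
    (hUH₂ : UniformlyHyperbolic T (schrodingerCocycle (⇑f) E₂))
    (d₁ d₂ : C(X, RP1))
    (hd₁ : IsUnstableSection T (schrodingerCocycle (⇑f) E₁) d₁)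
    (hd₂ : IsUnstableSection T (schrodingerCocycle (⇑f) E₂) d₂)
    (g₁ g₂ : X → ℝ → ℝ)
    (hg₁ : IsLiftFamily (schrodingerCocycle (⇑f) E₁) g₁)
    (hg₂ : IsLiftFamily (schrodingerCocycle (⇑f) E₂) g₂)
    (φ₁ φ₂ : X → ℝ)
    (hφ₁ : ∀ x y, RP1proj y = d₁ x → φ₁ x = g₁ x y - y)
    (hφ₂ : ∀ x y, RP1proj y = d₂ x → φ₂ x = g₂ x y - y)
    (hhom : d₁.Homotopic d₂) :
    ∃ k : ℤ, (∫ x, φ₁ x ∂μ) - (∫ x, φ₂ x ∂μ) = (k : ℝ) :=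
  homotopic_sections_rotation_numbers_differ_by_integer_general T μ hT f E₁ E₂ d₁ d₂ hd₁ hd₂ g₁ g₂
    hg₁ hg₂ φ₁ φ₂ hφ₁ hφ₂ hhom
end
end

section
/- If g̃ is a family of lifts for A, then there exists a real number ρ such that: (i) for every y ∈ ℝ, lim_{n→∞} (1/n) ∫_X G̃_{x,n}(y) dμ(x) = ρ, and (ii) for μ-almost every x ∈ X and every y ∈ ℝ, lim_{n→∞} G̃_{x,n}(y)/n = ρ. -/
/-!
Since the `SL(2,ℝ)` action is injective and `π` is injective modulo `ℤ`, each fibre map `g̃(x, ·)`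
is injective, hence an increasing degree-one circle lift, and so is every iterate `G̃_{x,n}`. For
such lifts `|F (G 0) - F 0 - G 0| < 1` and `|F y - F 0 - y| < 1`; thus `aₙ(x) = G̃_{x,n}(0)` is an
almost additive cocycle over `T`, and `G̃_{x,n}(y)` stays within `|y| + 1` of `aₙ(x)`.

Summing the almost additivity along an orbit gives `|S_n(a_m)(x) - m aₙ(x)| ≤ n + C_m` for the
Birkhoff sums `S_n`. Birkhoff's ergodic theorem for bounded observables (by the stopping-time
argument: raise `f` by a constant off a set of small measure so that every orbit splits into
blocks of average at least the target level, then integrate) gives `S_n(a_m)(x)/n → ∫ a_m` for a.e. `x`. So for a.e.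
`x` and every `m`, `aₙ(x)/n` is eventually within `2/m` of `∫ a_m / m`; this makes `∫ a_m / m`
Cauchy, and its limit `ρ` is the a.e. limit of `aₙ(x)/n`.
-/

open MeasureTheory Topology Filter

noncomputable section

theorem le_of_forall_natCast_mul_sub_le {β I K : ℝ} (h : ∀ N : ℕ, β * N - K ≤ N * I) : β ≤ I := by
  by_contra! hlt
  obtain ⟨N, hN⟩ := exists_nat_gt (K / (β - I))
  rw [div_lt_iff₀ (by linarith)] at hN
  linarith [h N]

theorem Filter.Frequently.mul_le_of_abs_sub_le {a b : ℕ → ℝ} {D q q' : ℝ}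
    (h : ∃ᶠ n in atTop, q * n ≤ a n) (hab : ∀ n, |a n - b n| ≤ D) (hq : q' < q) :
    ∃ᶠ n in atTop, q' * n ≤ b n := by
  have hev : ∀ᶠ n : ℕ in atTop, D ≤ (q - q') * n :=
    (tendsto_natCast_atTop_atTop.const_mul_atTop (sub_pos.2 hq)).eventually_ge_atTop D
  refine (h.and_eventually hev).mono fun n ⟨h1, h2⟩ => ?_
  linarith [(abs_le.1 (hab n)).2]

theorem Finset.sum_range_sub_shift_comm {M : Type*} [AddCommGroup M] (b : ℕ → M) (m n : ℕ) :
    ∑ k ∈ range n, (b (k + m) - b k) = ∑ j ∈ range m, (b (n + j) - b j) := by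
  have h₁ := Finset.sum_range_add b n m
  have h₂ := Finset.sum_range_add b m n
  rw [Nat.add_comm m n] at h₂
  simp only [Nat.add_comm m] at h₂
  rw [Finset.sum_sub_distrib, Finset.sum_sub_distrib, sub_eq_sub_iff_add_eq_add, add_comm, ← h₂,
    h₁, add_comm]

section Approximation

variable {s c e : ℕ → ℝ}

theorem cauchySeq_of_eventually_abs_sub_le (he : Tendsto e atTop (𝓝 0))
    (h : ∀ᶠ m in atTop, ∀ᶠ n in atTop, |s n - c m| ≤ e m) : CauchySeq c := by
  refine Metric.cauchySeq_iff'.2 fun ε hε => ?_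
  obtain ⟨N, hN⟩ := eventually_atTop.1
    (h.and (he.eventually (gt_mem_nhds (half_pos hε))))
  refine ⟨N, fun m hm => ?_⟩
  obtain ⟨k, hkm, hkN⟩ := ((hN m hm).1.and (hN N le_rfl).1).exists
  rw [Real.dist_eq]
  calc |c m - c N| ≤ |s k - c m| + |s k - c N| := by
        rw [abs_sub_comm (s k) (c m)]; exact abs_sub_le _ _ _
    _ < ε := by linarith [(hN m hm).2, (hN N le_rfl).2]

theorem tendsto_of_eventually_abs_sub_le {ρ : ℝ} (hc : Tendsto c atTop (𝓝 ρ))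
    (he : Tendsto e atTop (𝓝 0)) (h : ∀ᶠ m in atTop, ∀ᶠ n in atTop, |s n - c m| ≤ e m) :
    Tendsto s atTop (𝓝 ρ) := by
  refine Metric.tendsto_atTop.2 fun ε hε => ?_
  obtain ⟨m, hm, hem, hcm⟩ := (h.and ((he.eventually (gt_mem_nhds (half_pos hε))).and
    (hc.eventually (Metric.ball_mem_nhds ρ (half_pos hε))))).exists
  obtain ⟨N, hN⟩ := eventually_atTop.1 hm
  refine ⟨N, fun n hn => ?_⟩
  rw [Real.dist_eq] at hcm ⊢
  calc |s n - ρ| ≤ |s n - c m| + |c m - ρ| := abs_sub_le _ _ _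
    _ < ε := by linarith [hN n hn]

theorem Filter.Tendsto.div_natCast_of_abs_sub_le {s t : ℕ → ℝ} {B ρ : ℝ}
    (ht : Tendsto (fun n => t n / n) atTop (𝓝 ρ)) (h : ∀ n, |s n - t n| ≤ B) :
    Tendsto (fun n => s n / n) atTop (𝓝 ρ) := by
  have hdiff : Tendsto (fun n => (s n - t n) / n) atTop (𝓝 0) :=
    squeeze_zero_norm (fun n => by
      rw [Real.norm_eq_abs, abs_div, Nat.abs_cast]
      exact div_le_div_of_nonneg_right (h n) n.cast_nonneg)
      (tendsto_const_div_atTop_nhds_zero_nat B)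
  simpa [sub_div] using ht.add hdiff

end Approximation

section BirkhoffSum

variable {α : Type*} {T : α → α} {f : α → ℝ}

theorem sub_le_birkhoffSum_of_forall_exists_le {β D : ℝ} {M : ℕ} (hD : 0 ≤ D)
    (hlb : ∀ x, β - D ≤ f x)
    (hblock : ∀ x, ∃ n, 0 < n ∧ n ≤ M ∧ β * n ≤ birkhoffSum T f n x) (N : ℕ) (x : α) :
    β * N - M * D ≤ birkhoffSum T f N x := by
  induction N using Nat.strong_induction_on generalizing x with
  | _ N ih =>
    by_cases hNM : N ≤ M
    · have hsum : (N : ℝ) * (β - D) ≤ birkhoffSum T f N x := by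
        simpa [birkhoffSum] using
          Finset.card_nsmul_le_sum (Finset.range N) (fun k => f (T^[k] x)) _ fun k _ => hlb _
      have : (N : ℝ) * D ≤ M * D := by gcongr
      linarith
    · obtain ⟨n, hn0, hnM, hblk⟩ := hblock x
      obtain ⟨k, rfl⟩ : ∃ k, N = n + k := ⟨N - n, by omega⟩
      have hrest := ih k (by omega) (T^[n] x)
      rw [birkhoffSum_add, Nat.cast_add]
      linarith

theorem abs_birkhoffSum_apply_sub_le {C : ℝ} (hC : ∀ x, |f x| ≤ C) (n : ℕ) (x : α) :
    |birkhoffSum T f n (T x) - birkhoffSum T f n x| ≤ 2 * C := by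
  rw [birkhoffSum_apply_sub_birkhoffSum]
  linarith [abs_sub (f (T^[n] x)) (f x), hC (T^[n] x), hC x]

end BirkhoffSum

section BirkhoffLimsup

variable {α : Type*} {T : α → α} {f : α → ℝ} {C : ℝ}

/-- The set where `limsup (birkhoffSum T f n x / n) ≥ t`, described through rational levels so
that it is visibly measurable. -/
def birkhoffLimsupGe (T : α → α) (f : α → ℝ) (t : ℝ) : Set α :=
  {x | ∀ q : ℚ, (q : ℝ) < t → ∃ᶠ n in atTop, (q : ℝ) * n ≤ birkhoffSum T f n x}

theorem mem_birkhoffLimsupGe_of_abs_sub_le {t D : ℝ} {x y : α}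
    (hxy : ∀ n, |birkhoffSum T f n x - birkhoffSum T f n y| ≤ D)
    (hx : x ∈ birkhoffLimsupGe T f t) : y ∈ birkhoffLimsupGe T f t := fun q hq => by
  obtain ⟨q', hqq', hq't⟩ := exists_rat_btwn hq
  exact (hx q' hq't).mul_le_of_abs_sub_le hxy (by exact_mod_cast hqq')

theorem preimage_birkhoffLimsupGe (hC : ∀ x, |f x| ≤ C) (t : ℝ) :
    T ⁻¹' birkhoffLimsupGe T f t = birkhoffLimsupGe T f t := by
  ext x
  refine ⟨mem_birkhoffLimsupGe_of_abs_sub_le fun n => abs_birkhoffSum_apply_sub_le hC n x,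
    mem_birkhoffLimsupGe_of_abs_sub_le (D := 2 * C) fun n => ?_⟩
  rw [abs_sub_comm]
  exact abs_birkhoffSum_apply_sub_le hC n x

end BirkhoffLimsup

section MeasurePreserving

variable {α : Type*} [MeasurableSpace α] {μ : Measure α} {T : α → α} {f : α → ℝ}

theorem measurable_birkhoffSum (hT : Measurable T) (hf : Measurable f) (n : ℕ) :
    Measurable (birkhoffSum T f n) :=
  Finset.measurable_sum _ fun k _ => hf.comp (hT.iterate k)

theorem MeasureTheory.MeasurePreserving.integrable_birkhoffSum (hT : MeasurePreserving T μ μ)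
    (hf : Integrable f μ) (n : ℕ) : Integrable (birkhoffSum T f n) μ :=
  integrable_finsetSum _ fun k _ => (hT.iterate k).integrable_comp_of_integrable hf

theorem MeasureTheory.MeasurePreserving.integral_birkhoffSum (hT : MeasurePreserving T μ μ)
    (hf : Integrable f μ) (n : ℕ) : ∫ x, birkhoffSum T f n x ∂μ = n * ∫ x, f x ∂μ := by
  have hcomp : ∀ k, ∫ x, f (T^[k] x) ∂μ = ∫ x, f x ∂μ := fun k => by
    have hk := hT.iterate k
    rw [← integral_map hk.aemeasurable (hk.map_eq.symm ▸ hf.aestronglyMeasurable), hk.map_eq]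
  simp only [birkhoffSum]
  rw [integral_finsetSum (f := fun k x => f (T^[k] x)) _
    fun k _ => (hT.iterate k).integrable_comp_of_integrable hf]
  simp [hcomp]

end MeasurePreserving

namespace MeasureTheory.MeasurePreserving

variable {α : Type*} [MeasurableSpace α] {μ : Measure α} [IsProbabilityMeasure μ] {T : α → α}
  {f : α → ℝ} {C β : ℝ}

theorem le_integral_of_forall_sub_le_birkhoffSum (hT : MeasurePreserving T μ μ)
    (hf : Integrable f μ) {K : ℝ} (h : ∀ N x, β * N - K ≤ birkhoffSum T f N x) :
    β ≤ ∫ x, f x ∂μ := by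
  refine le_of_forall_natCast_mul_sub_le (K := K) fun N => ?_
  rw [← hT.integral_birkhoffSum hf]
  calc β * N - K = ∫ _x, (β * N - K) ∂μ := by simp
    _ ≤ ∫ x, birkhoffSum T f N x ∂μ :=
      integral_mono (integrable_const _) (hT.integrable_birkhoffSum hf N) (h N)

theorem le_integral_add_of_forall_mem_exists_le (hT : MeasurePreserving T μ μ)
    (hf : Measurable f) (hC : ∀ x, |f x| ≤ C) {E : Set α} (hE : MeasurableSet E) {M : ℕ}
    (hM : 0 < M) (hblock : ∀ x ∈ E, ∃ n, 0 < n ∧ n ≤ M ∧ β * n ≤ birkhoffSum T f n x) :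
    β ≤ ∫ x, f x ∂μ + (|β| + C) * μ.real Eᶜ := by
  have : Nonempty α := nonempty_of_isProbabilityMeasure μ
  have hC0 : 0 ≤ C := (abs_nonneg _).trans (hC (Classical.arbitrary α))
  have hf_int : Integrable f μ :=
    .of_bound hf.aestronglyMeasurable C (.of_forall fun x => (Real.norm_eq_abs _).trans_le (hC x))
  -- Raising `f` by `|β| + C` off `E` makes every point start a block of average at least `β`.
  set h : α → ℝ := fun x => f x + Eᶜ.indicator (fun _ => |β| + C) x
  have hf_le : ∀ x, f x ≤ h x := fun x =>
    le_add_of_nonneg_right (Set.indicator_nonneg (fun _ _ => by positivity) x)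
  have hh_lb : ∀ x, β - (|β| + C) ≤ h x := fun x => by
    linarith [hf_le x, le_abs_self β, (abs_le.1 (hC x)).1]
  have hblock' : ∀ x, ∃ n, 0 < n ∧ n ≤ M ∧ β * n ≤ birkhoffSum T h n x := fun x => by
    by_cases hx : x ∈ E
    · obtain ⟨n, hn0, hnM, hn⟩ := hblock x hx
      exact ⟨n, hn0, hnM, hn.trans (Finset.sum_le_sum fun k _ => hf_le _)⟩
    · refine ⟨1, one_pos, hM, ?_⟩
      simp only [birkhoffSum_one, h, Set.indicator_of_mem (Set.mem_compl hx), Nat.cast_one,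
        mul_one]
      linarith [le_abs_self β, (abs_le.1 (hC x)).1]
  have hh_int : Integrable h μ := hf_int.add ((integrable_const _).indicator hE.compl)
  have hh : ∫ x, h x ∂μ = ∫ x, f x ∂μ + (|β| + C) * μ.real Eᶜ := by
    rw [integral_add hf_int ((integrable_const _).indicator hE.compl),
      integral_indicator_const _ hE.compl, smul_eq_mul, mul_comm]
  rw [← hh]
  exact hT.le_integral_of_forall_sub_le_birkhoffSum hh_int
    (sub_le_birkhoffSum_of_forall_exists_le (by positivity) hh_lb hblock')

theorem le_integral_of_ae_exists_le_birkhoffSum (hT : MeasurePreserving T μ μ)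
    (hf : Measurable f) (hC : ∀ x, |f x| ≤ C)
    (h : ∀ᵐ x ∂μ, ∃ n, 0 < n ∧ β * n ≤ birkhoffSum T f n x) : β ≤ ∫ x, f x ∂μ := by
  set E : ℕ → Set α := fun M => {x | ∃ n, 0 < n ∧ n ≤ M ∧ β * n ≤ birkhoffSum T f n x}
  have hE : ∀ M, MeasurableSet (E M) := fun M => by
    simp only [E, Set.ofPred_exists, Set.ofPred_and]
    exact .iUnion fun n => (MeasurableSet.const _).inter <| (MeasurableSet.const _).inter <|
      measurableSet_le measurable_const (measurable_birkhoffSum hT.measurable hf n)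
  have hE_mono : Monotone E := fun M M' hM x ⟨n, hn0, hnM, hn⟩ => ⟨n, hn0, hnM.trans hM, hn⟩
  have hnull : μ (⋂ M, (E M)ᶜ) = 0 := by
    refine measure_eq_zero_iff_ae_notMem.2 (h.mono fun x ⟨n, hn0, hn⟩ hx => ?_)
    exact Set.mem_iInter.1 hx n ⟨n, hn0, le_rfl, hn⟩
  have htend : Tendsto (fun M => μ.real (E M)ᶜ) atTop (𝓝 0) := by
    have := tendsto_measure_iInter_atTop (fun M => (hE M).compl.nullMeasurableSet)
      (fun M M' hM => Set.compl_subset_compl.2 (hE_mono hM)) ⟨0, measure_ne_top μ _⟩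
    rw [hnull] at this
    exact (ENNReal.tendsto_toReal ENNReal.zero_ne_top).comp this
  refine ge_of_tendsto (by simpa using tendsto_const_nhds.add (htend.const_mul (|β| + C))) ?_
  filter_upwards [eventually_gt_atTop 0] with M hM
  exact hT.le_integral_add_of_forall_mem_exists_le hf hC (hE M) hM fun x hx => hx

end MeasureTheory.MeasurePreserving

section Ergodic

variable {α : Type*} [MeasurableSpace α] {μ : Measure α} [IsProbabilityMeasure μ] {T : α → α}
  {f : α → ℝ} {C : ℝ}

theorem measurableSet_birkhoffLimsupGe (hT : Measurable T) (hf : Measurable f) (t : ℝ) :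
    MeasurableSet (birkhoffLimsupGe T f t) := by
  simp only [birkhoffLimsupGe, frequently_atTop, Set.ofPred_forall, Set.ofPred_exists,
    Set.ofPred_and]
  exact .iInter fun q => .iInter fun _ => .iInter fun N => .iUnion fun n =>
    (MeasurableSet.const _).inter <|
      measurableSet_le measurable_const (measurable_birkhoffSum hT hf n)

theorem MeasureTheory.MeasurePreserving.le_integral_of_ae_mem_birkhoffLimsupGe
    (hT : MeasurePreserving T μ μ) (hf : Measurable f) (hC : ∀ x, |f x| ≤ C) {t : ℝ}
    (ht : ∀ᵐ x ∂μ, x ∈ birkhoffLimsupGe T f t) : t ≤ ∫ x, f x ∂μ := by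
  refine le_of_forall_rat_lt_imp_le fun q hq => hT.le_integral_of_ae_exists_le_birkhoffSum hf hC ?_
  filter_upwards [ht] with x hx
  obtain ⟨n, hn, hn0⟩ := ((hx q hq).and_eventually (eventually_gt_atTop 0)).exists
  exact ⟨n, hn0, hn⟩

theorem Ergodic.measure_birkhoffLimsupGe_eq_zero (hT : Ergodic T μ) (hf : Measurable f)
    (hC : ∀ x, |f x| ≤ C) {t : ℝ} (ht : ∫ x, f x ∂μ < t) : μ (birkhoffLimsupGe T f t) = 0 := by
  have hmeas := measurableSet_birkhoffLimsupGe hT.measurable hf t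
  refine (hT.prob_eq_zero_or_one hmeas (preimage_birkhoffLimsupGe hC t)).resolve_right fun h1 => ?_
  have hae : ∀ᵐ x ∂μ, x ∈ birkhoffLimsupGe T f t :=
    (ae_iff_measure_eq hmeas.nullMeasurableSet).2 (h1.trans measure_univ.symm)
  exact ht.not_ge (hT.toMeasurePreserving.le_integral_of_ae_mem_birkhoffLimsupGe hf hC hae)

theorem Ergodic.ae_eventually_birkhoffSum_lt (hT : Ergodic T μ) (hf : Measurable f)
    (hC : ∀ x, |f x| ≤ C) :
    ∀ᵐ x ∂μ, ∀ b, ∫ x, f x ∂μ < b → ∀ᶠ n in atTop, birkhoffSum T f n x < b * n := by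
  have hae : ∀ᵐ x ∂μ, ∀ t : ℚ, ∫ x, f x ∂μ < t → x ∉ birkhoffLimsupGe T f t :=
    ae_all_iff.2 fun t => by
      by_cases ht : ∫ x, f x ∂μ < t
      · filter_upwards [measure_eq_zero_iff_ae_notMem.1
          (hT.measure_birkhoffLimsupGe_eq_zero hf hC ht)] with x hx _ using hx
      · exact .of_forall fun x h => absurd h ht
  filter_upwards [hae] with x hx b hb
  obtain ⟨t, hft, htb⟩ := exists_rat_btwn hb
  obtain ⟨q, hqt, hq⟩ : ∃ q : ℚ, (q : ℝ) < t ∧ ∀ᶠ n in atTop, birkhoffSum T f n x < q * n := by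
    simpa [birkhoffLimsupGe] using hx t hft
  filter_upwards [hq, eventually_gt_atTop 0] with n hn hn0
  have : (q : ℝ) * n < b * n := by gcongr; linarith
  linarith

theorem Ergodic.ae_tendsto_birkhoffAverage (hT : Ergodic T μ) (hf : Measurable f)
    (hC : ∀ x, |f x| ≤ C) :
    ∀ᵐ x ∂μ, Tendsto (fun n => birkhoffAverage ℝ T f n x) atTop (𝓝 (∫ x, f x ∂μ)) := by
  have hneg := hT.ae_eventually_birkhoffSum_lt hf.neg (C := C) fun x => by simpa using hC x
  filter_upwards [hT.ae_eventually_birkhoffSum_lt hf hC, hneg] with x hup hlow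
  refine tendsto_order.2 ⟨fun b hb => ?_, fun b hb => ?_⟩
  · filter_upwards [hlow (-b) (by simpa [integral_neg] using hb), eventually_gt_atTop 0]
      with n hn hn0
    rw [birkhoffSum_neg] at hn
    rw [birkhoffAverage, smul_eq_mul, inv_mul_eq_div, lt_div_iff₀ (by positivity)]
    linarith
  · filter_upwards [hup b hb, eventually_gt_atTop 0] with n hn hn0
    rwa [birkhoffAverage, smul_eq_mul, inv_mul_eq_div, div_lt_iff₀ (by positivity)]

end Ergodic

section AlmostAdditive

variable {α : Type*} {T : α → α} {a : ℕ → α → ℝ} {D : ℝ} {C : ℕ → ℝ}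

theorem abs_birkhoffSum_sub_mul_le (hadd : ∀ m n x, |a (m + n) x - a m x - a n (T^[m] x)| ≤ D)
    (hC : ∀ j x, |a j x| ≤ C j) (m n : ℕ) (x : α) :
    |birkhoffSum T (a m) n x - m * a n x| ≤ n * D + ∑ j ∈ Finset.range m, (D + 2 * C j) := by
  have hsplit : birkhoffSum T (a m) n x - m * a n x =
      ∑ k ∈ Finset.range n, -(a (k + m) x - a k x - a m (T^[k] x)) +
        ∑ j ∈ Finset.range m, (a (n + j) x - a j x - a n x) := by
    have hshift := Finset.sum_range_sub_shift_comm (a · x) m n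
    simp only [birkhoffSum, Finset.sum_neg_distrib, Finset.sum_sub_distrib, Finset.sum_const,
      Finset.card_range, nsmul_eq_mul] at hshift ⊢
    linarith
  rw [hsplit]
  refine (abs_add_le _ _).trans (add_le_add ?_ ?_)
  · calc _ ≤ ∑ k ∈ Finset.range n, D := (Finset.abs_sum_le_sum_abs _ _).trans
          (Finset.sum_le_sum fun k _ => (abs_neg _).trans_le (hadd k m x))
      _ = n * D := by simp
  · refine (Finset.abs_sum_le_sum_abs _ _).trans (Finset.sum_le_sum fun j _ => ?_)
    have h₁ := abs_le.1 (hadd n j x)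
    have h₂ := abs_le.1 (hC j (T^[n] x))
    have h₃ := abs_le.1 (hC j x)
    rw [abs_le]
    constructor <;> linarith

theorem eventually_abs_div_sub_div_le
    (hadd : ∀ m n x, |a (m + n) x - a m x - a n (T^[m] x)| ≤ D) (hC : ∀ j x, |a j x| ≤ C j)
    {m : ℕ} (hm : 0 < m) {x : α} {v : ℝ}
    (hv : Tendsto (fun n => birkhoffAverage ℝ T (a m) n x) atTop (𝓝 v)) :
    ∀ᶠ n in atTop, |a n x / n - v / m| ≤ (D + 1) / m := by
  set E := ∑ j ∈ Finset.range m, (D + 2 * C j)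
  have hv' : ∀ᶠ n in atTop, |birkhoffAverage ℝ T (a m) n x - v| ≤ 1 / 2 :=
    (hv.sub_const v).abs.eventually_le_const (by simp)
  filter_upwards [hv', tendsto_natCast_atTop_atTop.eventually_ge_atTop (2 * E),
    eventually_gt_atTop 0] with n hvn hEn hn
  have hn' : (0 : ℝ) < n := by exact_mod_cast hn
  have hm' : (0 : ℝ) < m := by exact_mod_cast hm
  rw [birkhoffAverage, smul_eq_mul, inv_mul_eq_div, div_sub' hn'.ne', abs_div, abs_of_pos hn',
    div_le_iff₀ hn'] at hvn
  have hkey : |m * a n x - n * v| ≤ (D + 1) * n := by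
    calc |m * a n x - n * v|
        ≤ |birkhoffSum T (a m) n x - m * a n x| + |birkhoffSum T (a m) n x - n * v| := by
          rw [abs_sub_comm (birkhoffSum _ _ _ _)]; exact abs_sub_le _ _ _
      _ ≤ (n * D + E) + 1 / 2 * n :=
          add_le_add (abs_birkhoffSum_sub_mul_le hadd hC m n x) (by linarith)
      _ ≤ (D + 1) * n := by linarith
  rw [div_sub_div _ _ hn'.ne' hm'.ne', abs_div, abs_of_pos (mul_pos hn' hm'),
    div_le_div_iff₀ (mul_pos hn' hm') hm']
  calc |a n x * m - n * v| * m ≤ (D + 1) * n * m := by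
        rw [mul_comm (a n x)]; gcongr
    _ = (D + 1) * (n * m) := by ring

end AlmostAdditive

theorem Ergodic.exists_tendsto_div_of_abs_add_sub_le {α : Type*} [MeasurableSpace α]
    {μ : Measure α} [IsProbabilityMeasure μ] {T : α → α} (hT : Ergodic T μ) {a : ℕ → α → ℝ}
    {D : ℝ} (hmeas : ∀ n, Measurable (a n)) (hbdd : ∀ n, ∃ C, ∀ x, |a n x| ≤ C)
    (hadd : ∀ m n x, |a (m + n) x - a m x - a n (T^[m] x)| ≤ D) :
    ∃ ρ, Tendsto (fun n => (∫ x, a n x ∂μ) / n) atTop (𝓝 ρ) ∧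
      ∀ᵐ x ∂μ, Tendsto (fun n => a n x / n) atTop (𝓝 ρ) := by
  choose C hC using hbdd
  have he : Tendsto (fun m : ℕ => (D + 1) / m) atTop (𝓝 0) :=
    tendsto_const_div_atTop_nhds_zero_nat _
  have hnear : ∀ᵐ x ∂μ, ∀ᶠ m in atTop, ∀ᶠ n in atTop,
      |a n x / n - (∫ x, a m x ∂μ) / m| ≤ (D + 1) / m := by
    filter_upwards [ae_all_iff.2 fun m => hT.ae_tendsto_birkhoffAverage (hmeas m) (hC m)]
      with x hx
    filter_upwards [eventually_gt_atTop 0] with m hm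
    exact eventually_abs_div_sub_div_le hadd hC hm (hx m)
  obtain ⟨x₀, hx₀⟩ := hnear.exists
  obtain ⟨ρ, hρ⟩ := cauchySeq_tendsto_of_complete (cauchySeq_of_eventually_abs_sub_le he hx₀)
  exact ⟨ρ, hρ, hnear.mono fun x hx => tendsto_of_eventually_abs_sub_le hρ he hx⟩

namespace CircleDeg1Lift

theorem abs_map_sub_map_zero_sub_lt (f : CircleDeg1Lift) (y : ℝ) : |f y - f 0 - y| < 1 := by
  have h₁ := f.map_le_of_map_zero y
  have h₂ := f.le_map_of_map_zero y
  rw [abs_lt]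
  constructor <;> linarith [Int.ceil_lt_add_one y, Int.sub_one_lt_floor y]

variable {X : Type*} (T : X → X) (G : X → CircleDeg1Lift)

def cocycle : ℕ → X → CircleDeg1Lift
  | 0, _ => 1
  | n + 1, x => cocycle n (T x) * G x

theorem coe_cocycle (n : ℕ) (x : X) : ⇑(cocycle T G n x) = liftIter T (fun x => G x) n x := by
  induction n generalizing x with
  | zero => rfl
  | succ n ih => funext y; simp [cocycle, liftIter, ih]

theorem cocycle_add (m n : ℕ) (x : X) :
    cocycle T G (m + n) x = cocycle T G n (T^[m] x) * cocycle T G m x := by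
  induction m generalizing x with
  | zero => simp [cocycle]
  | succ m ih =>
    rw [Nat.add_right_comm, cocycle, ih, cocycle, Function.iterate_succ_apply, mul_assoc]

end CircleDeg1Lift

theorem exists_int_eq_add_of_RP1proj_eq {y₁ y₂ : ℝ} (h : RP1proj y₁ = RP1proj y₂) :
    ∃ k : ℤ, y₁ = y₂ + k := by
  obtain ⟨a, ha⟩ := (Projectivization.mk_eq_mk_iff ℝ _ _ _ _).1 h
  have hcos : a * Real.cos (Real.pi * y₂) = Real.cos (Real.pi * y₁) := by
    simpa [Units.smul_def] using congrFun ha 0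
  have hsin : a * Real.sin (Real.pi * y₂) = Real.sin (Real.pi * y₁) := by
    simpa [Units.smul_def] using congrFun ha 1
  -- parallel unit vectors at angles `π y₁`, `π y₂` have vanishing determinant `sin (π (y₁ - y₂))`
  have hdet : Real.sin (Real.pi * (y₁ - y₂)) = 0 := by
    rw [mul_sub, Real.sin_sub, ← hcos, ← hsin]
    ring
  obtain ⟨k, hk⟩ := Real.sin_eq_zero_iff.1 hdet
  refine ⟨k, ?_⟩
  have := Real.pi_pos
  nlinarith [hk]

theorem SL2act_injective (A : SL2) : Function.Injective (SL2act A) := by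
  unfold SL2act
  exact Projectivization.map_injective _ _

namespace IsLiftFamily

variable {X : Type*} [TopologicalSpace X] {A : X → SL2} {g : X → ℝ → ℝ}

theorem map_add_nat (hg : IsLiftFamily A g) (x : X) (y : ℝ) (n : ℕ) :
    g x (y + n) = g x y + n := by
  induction n with
  | zero => simp
  | succ n ih =>
    push_cast
    rw [← add_assoc, hg.2.2, ih, add_assoc]

theorem injective (hg : IsLiftFamily A g) (x : X) : Function.Injective (g x) := by
  intro y₁ y₂ hy
  have hproj : RP1proj y₁ = RP1proj y₂ :=
    SL2act_injective (A x) (by rw [← hg.2.1, ← hg.2.1, hy])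
  obtain ⟨k, hk⟩ := exists_int_eq_add_of_RP1proj_eq hproj
  obtain ⟨n, rfl | rfl⟩ := Int.eq_nat_or_neg k
  · have := hg.map_add_nat x y₂ n
    rw [← Int.cast_natCast, ← hk, hy] at this
    linarith
  · have := hg.map_add_nat x y₁ n
    rw [show y₁ + n = y₂ by push_cast at hk; linarith, hy] at this
    push_cast at hk
    linarith

theorem strictMono (hg : IsLiftFamily A g) (x : X) : StrictMono (g x) := by
  refine ((hg.1.comp (Continuous.prodMk_right x)).strictMono_of_inj (hg.injective x)).resolve_right
    fun hanti => ?_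
  have h01 : g x 1 < g x 0 := hanti zero_lt_one
  have hper := hg.2.2 x 0
  rw [zero_add] at hper
  linarith

def toCircleDeg1Lift (hg : IsLiftFamily A g) (x : X) : CircleDeg1Lift :=
  ⟨⟨g x, (hg.strictMono x).monotone⟩, hg.2.2 x⟩

theorem coe_cocycle_toCircleDeg1Lift (hg : IsLiftFamily A g) (T : X → X) (n : ℕ) (x : X) :
    ⇑(CircleDeg1Lift.cocycle T hg.toCircleDeg1Lift n x) = liftIter T g n x :=
  CircleDeg1Lift.coe_cocycle _ _ n x

theorem abs_liftIter_add_sub_le (hg : IsLiftFamily A g) (T : X → X) (m n : ℕ) (x : X) :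
    |liftIter T g (m + n) x 0 - liftIter T g m x 0 - liftIter T g n (T^[m] x) 0| ≤ 1 := by
  have := CircleDeg1Lift.dist_map_map_zero_lt (.cocycle T hg.toCircleDeg1Lift n (T^[m] x))
    (.cocycle T hg.toCircleDeg1Lift m x)
  rw [← CircleDeg1Lift.mul_apply, ← CircleDeg1Lift.cocycle_add, Real.dist_eq, abs_sub_comm] at this
  simp only [coe_cocycle_toCircleDeg1Lift] at this
  rw [sub_sub, add_comm (liftIter T g m x 0)]
  exact this.le

theorem abs_liftIter_sub_liftIter_zero_le (hg : IsLiftFamily A g) (T : X → X) (n : ℕ) (x : X)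
    (y : ℝ) : |liftIter T g n x y - liftIter T g n x 0| ≤ |y| + 1 := by
  have := (CircleDeg1Lift.cocycle T hg.toCircleDeg1Lift n x).abs_map_sub_map_zero_sub_lt y
  rw [coe_cocycle_toCircleDeg1Lift] at this
  linarith [abs_sub_abs_le_abs_sub (liftIter T g n x y - liftIter T g n x 0) y]

end IsLiftFamily

theorem continuous_liftIter {X : Type*} [TopologicalSpace X] {T : X → X} {g : X → ℝ → ℝ}
    (hT : Continuous T) (hg : Continuous fun p : X × ℝ => g p.1 p.2) (n : ℕ) :
    Continuous fun p : X × ℝ => liftIter T g n p.1 p.2 := by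
  induction n with
  | zero => exact continuous_snd
  | succ n ih => exact ih.comp ((hT.comp continuous_fst).prodMk hg)

theorem rotation_number_exists_general
    {X : Type*} [MetricSpace X] [CompactSpace X]
    [MeasurableSpace X] [BorelSpace X]
    (T : X ≃ₜ X) (μ : Measure X) [IsProbabilityMeasure μ] (hT : Ergodic (⇑T) μ)
    (A : X → SL2)
    (g : X → ℝ → ℝ) (hg : IsLiftFamily A g) :
    ∃ ρ : ℝ,
      (∀ y : ℝ, Tendsto (fun n : ℕ => (∫ x, liftIter (⇑T) g n x y ∂μ) / n) atTop (𝓝 ρ)) ∧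
      ∀ᵐ x ∂μ, ∀ y : ℝ, Tendsto (fun n : ℕ => liftIter (⇑T) g n x y / n) atTop (𝓝 ρ) := by
  have hcont : ∀ n y, Continuous fun x => liftIter T g n x y := fun n y =>
    (continuous_liftIter T.continuous hg.1 n).comp (continuous_id.prodMk continuous_const)
  have hbdd : ∀ n, ∃ C, ∀ x, |liftIter T g n x 0| ≤ C := fun n => by
    obtain ⟨C, hC⟩ := isCompact_univ.exists_bound_of_continuousOn (hcont n 0).continuousOn
    exact ⟨C, fun x => hC x trivial⟩
  obtain ⟨ρ, hint, hae⟩ :=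
    hT.exists_tendsto_div_of_abs_add_sub_le (fun n => (hcont n 0).measurable) hbdd
      (hg.abs_liftIter_add_sub_le T)
  refine ⟨ρ, fun y => hint.div_natCast_of_abs_sub_le (B := |y| + 1) fun n => ?_,
    hae.mono fun x hx y => hx.div_natCast_of_abs_sub_le fun n =>
      hg.abs_liftIter_sub_liftIter_zero_le T n x y⟩
  have hint_n : ∀ y, Integrable (fun x => liftIter T g n x y) μ := fun y =>
    (hcont n y).integrable_of_hasCompactSupport (.of_compactSpace _)
  rw [← integral_sub (hint_n y) (hint_n 0)]
  simpa using norm_integral_le_of_norm_le_const (μ := μ)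
    (f := fun x => liftIter T g n x y - liftIter T g n x 0)
    (.of_forall fun x => hg.abs_liftIter_sub_liftIter_zero_le T n x y)

/-- For any family of lifts `g̃` of a continuous `SL(2,ℝ)`-cocycle over an
ergodic system, the rotation number exists: the averaged limits and the `μ`-a.e. fiberwise
limits of `G̃_{x,n}(y)/n` exist and equal a common constant `ρ`. -/
theorem rotation_number_exists
    {X : Type*} [MetricSpace X] [CompactSpace X]
    [MeasurableSpace X] [BorelSpace X]
    (T : X ≃ₜ X) (μ : Measure X) [IsProbabilityMeasure μ] (hT : Ergodic (⇑T) μ)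
    (A : X → SL2) (hA : Continuous A)
    (g : X → ℝ → ℝ) (hg : IsLiftFamily A g) :
    ∃ ρ : ℝ,
      (∀ y : ℝ, Tendsto (fun n : ℕ => (∫ x, liftIter (⇑T) g n x y ∂μ) / n) atTop (𝓝 ρ)) ∧
      ∀ᵐ x ∂μ, ∀ y : ℝ, Tendsto (fun n : ℕ => liftIter (⇑T) g n x y / n) atTop (𝓝 ρ) :=
  rotation_number_exists_general T μ hT A g hg

end
end
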